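/- arXiv:2604.26914 — 2 statements merged into one kernel-verified Lean document; each statement's English description precedes it below -/
import Mathlib

section
/- For the two-band twister model, the spectrum is degenerate (E₊(k) = E₋(k)) at some k ∈ [0, 2π] if and only if (m₀, m₁) lies on one of the following loci: (m₁+1)² − m₀² = 0 with e^{ik} = 1; m₁² − 1 + m₀² = 0 with e^{ik} = −1; or 1 + m₀² + m₁ = 0 with cos k = −m₁/2 (requiring |m₁| ≤ 2); or (m₀, m₁) = (0, −1). -/
open Complex Real

/-- The two-band twister spectrum is degenerate at `k` iff `(m₀, m₁)` lies on one of the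
stated loci (with the corresponding condition on `e^{ik}`). -/
theorem two_band_degeneracy_loci (m₀ m₁ k : ℝ) (hk : k ∈ Set.Icc (0 : ℝ) (2 * π)) :
    (Complex.exp (2 * Complex.I * k) * ((m₁ : ℂ) + 1) +
        (m₁ : ℂ) * Complex.exp (Complex.I * k) * ((m₁ : ℂ) + 1) - (m₀ : ℂ) ^ 2 = 0) ↔
      (((m₁ + 1) ^ 2 - m₀ ^ 2 = 0 ∧ Complex.exp (Complex.I * k) = 1) ∨
       (m₁ ^ 2 - 1 + m₀ ^ 2 = 0 ∧ Complex.exp (Complex.I * k) = -1) ∨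
       (1 + m₀ ^ 2 + m₁ = 0 ∧ Real.cos k = -m₁ / 2 ∧ |m₁| ≤ 2) ∨
       (m₀ = 0 ∧ m₁ = -1)) := by
  set x := Real.cos k with hxdef
  set y := Real.sin k with hydef
  have pyth : x ^ 2 + y ^ 2 = 1 := by
    rw [hxdef, hydef]; nlinarith [Real.sin_sq_add_cos_sq k]
  have hx : Complex.exp (Complex.I * k) = (x : ℂ) + (y : ℂ) * Complex.I := by
    rw [mul_comm Complex.I (k : ℂ), Complex.exp_mul_I, ← Complex.ofReal_cos,
      ← Complex.ofReal_sin, ← hxdef, ← hydef]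
  have h2 : Complex.exp (2 * Complex.I * k) = Complex.exp (Complex.I * k) ^ 2 := by
    rw [show (2 : ℂ) * Complex.I * k = Complex.I * k + Complex.I * k by ring,
      Complex.exp_add]; ring
  set A := (m₁ + 1) * (x ^ 2 - y ^ 2 + m₁ * x) - m₀ ^ 2 with hAdef
  set B := (m₁ + 1) * y * (2 * x + m₁) with hBdef
  have key : Complex.exp (2 * Complex.I * k) * ((m₁ : ℂ) + 1) +
      (m₁ : ℂ) * Complex.exp (Complex.I * k) * ((m₁ : ℂ) + 1) - (m₀ : ℂ) ^ 2 =
      (A : ℂ) + (B : ℂ) * Complex.I := by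
    rw [h2, hx, hAdef, hBdef]; push_cast
    linear_combination ((m₁ : ℂ) + 1) * (y : ℂ) ^ 2 * Complex.I_sq
  have heq : (Complex.exp (2 * Complex.I * k) * ((m₁ : ℂ) + 1) +
      (m₁ : ℂ) * Complex.exp (Complex.I * k) * ((m₁ : ℂ) + 1) - (m₀ : ℂ) ^ 2 = 0) ↔
      (A = 0 ∧ B = 0) := by
    rw [key]
    constructor
    · intro h
      have hre := congrArg Complex.re h
      have him := congrArg Complex.im h
      simp at hre him
      exact ⟨hre, him⟩
    · rintro ⟨h1, h2⟩; rw [h1, h2]; simp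
  have hone : (Complex.exp (Complex.I * k) = 1) ↔ (x = 1 ∧ y = 0) := by
    rw [hx, Complex.ext_iff]; simp
  have hneg : (Complex.exp (Complex.I * k) = -1) ↔ (x = -1 ∧ y = 0) := by
    rw [hx, Complex.ext_iff]; simp
  rw [heq, hone, hneg]
  constructor
  · rintro ⟨hA, hB⟩
    rw [hAdef] at hA
    rcases mul_eq_zero.mp (hBdef ▸ hB) with hB' | h3
    · rcases mul_eq_zero.mp hB' with h1 | h0
      · -- m₁ + 1 = 0
        have hm1 : m₁ = -1 := by linarith
        rw [hm1] at hA
        have hm0sq : m₀ ^ 2 = 0 := by linear_combination -hA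
        have hm0 : m₀ = 0 := by
          exact (pow_eq_zero_iff two_ne_zero).mp hm0sq
        exact Or.inr (Or.inr (Or.inr ⟨hm0, hm1⟩))
      · -- y = 0
        have hfac : (x - 1) * (x + 1) = 0 := by nlinarith
        rcases mul_eq_zero.mp hfac with h | h
        · have hx1 : x = 1 := by linarith
          rw [hx1, h0] at hA
          exact Or.inl ⟨by linear_combination hA, hx1, h0⟩
        · have hx1 : x = -1 := by linarith
          rw [hx1, h0] at hA
          exact Or.inr (Or.inl ⟨by linear_combination -hA, hx1, h0⟩)
    · -- 2x + m₁ = 0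
      have hxm : x = -m₁ / 2 := by linarith
      rw [hxm] at hA pyth
      have habs : |m₁| ≤ 2 := by
        rw [abs_le]; constructor <;> nlinarith [sq_nonneg y]
      exact Or.inr (Or.inr (Or.inl ⟨by linear_combination -hA - (m₁ + 1) * pyth, hxm, habs⟩))
  · rintro (⟨h, hx1, hy0⟩ | ⟨h, hx1, hy0⟩ | ⟨h, hx1, habs⟩ | ⟨h0, h1⟩)
    · rw [hAdef, hBdef, hx1, hy0]
      exact ⟨by linear_combination h, by ring⟩
    · rw [hAdef, hBdef, hx1, hy0]
      exact ⟨by linear_combination -h, by ring⟩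
    · rw [hx1] at pyth
      rw [hAdef, hBdef, hx1]
      exact ⟨by linear_combination -h - (m₁ + 1) * pyth, by ring⟩
    · rw [hAdef, hBdef, h0, h1]
      exact ⟨by ring, by ring⟩
end

section
/- The eigenvalues of the four-band twister matrix H^{(4)}(k) satisfy: λ is an eigenvalue if and only if 9λ² = −5m₀² ± √(16m₀⁴ + 81e^{ik}(m₁+1)³(m₁ + e^{ik})); equivalently, the characteristic polynomial of H^{(4)}(k) equals λ⁴ + (10 m₀²/9) λ² + (m₀⁴/81 − e^{ik}(m₁+1)³(m₁ + e^{ik})) (up to the stated normalization). -/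
open Complex Matrix

/-! The twister matrix is lower bidiagonal plus one corner entry, so `det (μ - H)` is the product
of the `μ - dᵢ` minus the corner entry times the product of the subdiagonal. The diagonal entries
come in pairs `±i m₀`, `±i m₀/3`, which makes this a quadratic in `μ²`; completing the square gives
`81 det (μ - H) = (9μ² + 5m₀²)² - (16m₀⁴ + 81 e^{ik}(m₁+1)³(m₁+e^{ik}))`. -/

theorem det_scalar_sub_cyclicBidiagonal_fin_four {R : Type*} [CommRing R]
    (μ d₀ d₁ d₂ d₃ s₁ s₂ s₃ t : R) :
    (scalar (Fin 4) μ - !![d₀, 0, 0, t; s₁, d₁, 0, 0; 0, s₂, d₂, 0; 0, 0, s₃, d₃]).det =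
      (μ - d₀) * (μ - d₁) * (μ - d₂) * (μ - d₃) - t * s₁ * s₂ * s₃ := by
  simp [det_succ_row_zero, Fin.sum_univ_succ, Fin.succAbove]
  ring

theorem exists_sq_eq_and_eq_add_iff {R : Type*} [CommRing R] (D x y : R) :
    (∃ s, s ^ 2 = D ∧ y = x + s) ↔ (y - x) ^ 2 = D :=
  ⟨fun ⟨s, hs, hy⟩ => by rwa [hy, add_sub_cancel_left], fun h => ⟨y - x, h, by ring⟩⟩

/-- Eigenvalues of the four-band twister matrix: `μ` is an eigenvalue iff
`9μ² = −5m₀² ± √(16m₀⁴ + 81 e^{ik}(m₁+1)³(m₁+e^{ik}))`. -/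
theorem four_band_twister_eigenvalues (m₀ m₁ k : ℝ) :
    ∀ μ : ℂ, μ ∈ spectrum ℂ
      (!![Complex.I * (m₀ : ℂ), 0, 0,
            Complex.exp (2 * Complex.I * k) + (m₁ : ℂ) * Complex.exp (Complex.I * k);
          1 + (m₁ : ℂ), Complex.I * (m₀ : ℂ) / 3, 0, 0;
          0, 1 + (m₁ : ℂ), -(Complex.I * (m₀ : ℂ) / 3), 0;
          0, 0, 1 + (m₁ : ℂ), -(Complex.I * (m₀ : ℂ))] : Matrix (Fin 4) (Fin 4) ℂ) ↔
      ∃ s : ℂ, s ^ 2 = 16 * (m₀ : ℂ) ^ 4 +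
          81 * Complex.exp (Complex.I * k) * ((m₁ : ℂ) + 1) ^ 3 *
            ((m₁ : ℂ) + Complex.exp (Complex.I * k)) ∧
        9 * μ ^ 2 = -5 * (m₀ : ℂ) ^ 2 + s := by
  intro μ
  have hexp : exp (2 * I * k) = exp (I * k) ^ 2 := by rw [sq, ← exp_add]; ring_nf
  have hdiag : (μ - I * m₀) * (μ - I * m₀ / 3) * (μ - -(I * m₀ / 3)) * (μ - -(I * m₀)) =
      (μ ^ 2 + m₀ ^ 2) * (μ ^ 2 + m₀ ^ 2 / 9) := by
    linear_combination (-(10 / 9) * (m₀ : ℂ) ^ 2 * μ ^ 2 + (m₀ : ℂ) ^ 4 * (I ^ 2 - 1) / 9) * I_sq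
  rw [mem_spectrum_iff_isRoot_charpoly, Polynomial.IsRoot, eval_charpoly,
    det_scalar_sub_cyclicBidiagonal_fin_four, hdiag, hexp, exists_sq_eq_and_eq_add_iff,
    ← sub_eq_zero, ← mul_eq_zero_iff_left (by norm_num : (81 : ℂ) ≠ 0)]
  constructor <;> intro h <;> linear_combination h
end
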